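/- arXiv:1809.05569 — 2 statements merged into one kernel-verified Lean document; each statement's English description precedes it below -/
import Mathlib

section
/- Let x be an automorphism of prime order p of a finite generalized quadrangle Q of order (s,t). If x fixes at least one point, any two distinct fixed points of x are noncollinear, and x fixes no line, then p divides t+1. Dually, if x fixes at least one line, any two distinct fixed lines of x are nonconcurrent, and x fixes no point, then p divides s+1. -/
/-- `IsGQ I s t` : the incidence relation `I` between the (finite) point type `P`
and line type `L` is a finite generalized quadrangle of order `(s,t)`. -/
structure IsGQ {P L : Type*} (I : P → L → Prop) (s t : ℕ) : Prop where
  finP : Finite P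
  finL : Finite L
  s_pos : 0 < s
  t_pos : 0 < t
  line_pts : ∀ ℓ : L, Nat.card {p : P // I p ℓ} = s + 1
  pt_lines : ∀ p : P, Nat.card {ℓ : L // I p ℓ} = t + 1
  unique_line : ∀ p q : P, p ≠ q → Nat.card {ℓ : L // I p ℓ ∧ I q ℓ} ≤ 1
  gq_axiom : ∀ (p : P) (ℓ : L), ¬ I p ℓ →
      ∃! pl : P × L, I p pl.2 ∧ I pl.1 pl.2 ∧ I pl.1 ℓ

/-- An automorphism of the incidence structure `I` : a pair of permutations of the
points and of the lines preserving incidence. -/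
@[ext] structure GQAut {P L : Type*} (I : P → L → Prop) where
  permP : Equiv.Perm P
  permL : Equiv.Perm L
  pres : ∀ p ℓ, I (permP p) (permL ℓ) ↔ I p ℓ

namespace GQAut

variable {P L : Type*} {I : P → L → Prop}

instance : Group (GQAut I) where
  mul x y := ⟨x.permP * y.permP, x.permL * y.permL, by
    intro p ℓ
    simp only [Equiv.Perm.mul_apply]
    rw [x.pres, y.pres]⟩
  one := ⟨1, 1, fun p ℓ => Iff.rfl⟩
  inv x := ⟨x.permP⁻¹, x.permL⁻¹, by
    intro p ℓ
    simpa using (x.pres (x.permP⁻¹ p) (x.permL⁻¹ ℓ)).symm⟩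
  mul_assoc a b c := by ext <;> rfl
  one_mul a := by ext <;> rfl
  mul_one a := by ext <;> rfl
  inv_mul_cancel a := by
    ext z
    · show a.permP⁻¹ (a.permP z) = z
      simp
    · show a.permL⁻¹ (a.permL z) = z
      simp

end GQAut

/-- Two points are collinear if some line is incident with both. -/
def Collin {P L : Type*} (I : P → L → Prop) (p q : P) : Prop := ∃ ℓ, I p ℓ ∧ I q ℓ

/-- Two lines are concurrent if some point is incident with both. -/
def Concur {P L : Type*} (I : P → L → Prop) (ℓ m : L) : Prop := ∃ p, I p ℓ ∧ I p m

/-- Number of points fixed by the automorphism `x`. -/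
noncomputable def alpha0 {P L : Type*} {I : P → L → Prop} (x : GQAut I) : ℕ :=
  Nat.card {p : P // x.permP p = p}

/-- Number of points moved by `x` to a distinct collinear point. -/
noncomputable def alpha1 {P L : Type*} {I : P → L → Prop} (x : GQAut I) : ℕ :=
  Nat.card {p : P // x.permP p ≠ p ∧ Collin I p (x.permP p)}

/-- Number of points sent by `x` to a noncollinear point. -/
noncomputable def alpha2 {P L : Type*} {I : P → L → Prop} (x : GQAut I) : ℕ :=
  Nat.card {p : P // ¬ Collin I p (x.permP p)}

/-- Number of lines fixed by the automorphism `x`. -/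
noncomputable def beta0 {P L : Type*} {I : P → L → Prop} (x : GQAut I) : ℕ :=
  Nat.card {ℓ : L // x.permL ℓ = ℓ}

/-- Number of lines moved by `x` to a distinct concurrent line. -/
noncomputable def beta1 {P L : Type*} {I : P → L → Prop} (x : GQAut I) : ℕ :=
  Nat.card {ℓ : L // x.permL ℓ ≠ ℓ ∧ Concur I ℓ (x.permL ℓ)}

/-- Number of lines sent by `x` to a nonconcurrent line. -/
noncomputable def beta2 {P L : Type*} {I : P → L → Prop} (x : GQAut I) : ℕ :=
  Nat.card {ℓ : L // ¬ Concur I ℓ (x.permL ℓ)}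

/-- The automorphism group is transitive on points. -/
def PointTransitive {P L : Type*} (I : P → L → Prop) : Prop :=
  ∀ p q : P, ∃ x : GQAut I, x.permP p = q

/-- The automorphism group is transitive on lines. -/
def LineTransitive {P L : Type*} (I : P → L → Prop) : Prop :=
  ∀ ℓ m : L, ∃ x : GQAut I, x.permL ℓ = m

/-- The fixed substructure of `x` has type (2): there is a fixed point `P₀` collinear
with every fixed point, at least one line is fixed, and every fixed line passes through `P₀`. -/
def FixedType2 {P L : Type*} (I : P → L → Prop) (x : GQAut I) : Prop :=
  ∃ P₀ : P, x.permP P₀ = P₀ ∧ (∀ p, x.permP p = p → Collin I P₀ p) ∧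
    (∃ ℓ, x.permL ℓ = ℓ) ∧ (∀ ℓ, x.permL ℓ = ℓ → I P₀ ℓ)

/-- The fixed substructure of `x` has type (2'): there is a fixed line `ℓ₀` concurrent
with every fixed line, at least one point is fixed, and every fixed point lies on `ℓ₀`. -/
def FixedType2' {P L : Type*} (I : P → L → Prop) (x : GQAut I) : Prop :=
  ∃ ℓ₀ : L, x.permL ℓ₀ = ℓ₀ ∧ (∀ ℓ, x.permL ℓ = ℓ → Concur I ℓ₀ ℓ) ∧
    (∃ p, x.permP p = p) ∧ (∀ p, x.permP p = p → I p ℓ₀)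

/-- The fixed substructure of `x` (fixed points and fixed lines with induced incidence)
is a generalized subquadrangle of order `(s', t')`. -/
def FixedSubGQ {P L : Type*} (I : P → L → Prop) (x : GQAut I) (s' t' : ℕ) : Prop :=
  IsGQ (fun (p : {p : P // x.permP p = p}) (ℓ : {ℓ : L // x.permL ℓ = ℓ}) => I p.1 ℓ.1) s' t'

/-!
The lines through a fixed point `q` are permuted by `x`, and `x ^ p = 1` with `p` prime makes
every orbit of this permutation a singleton or of size `p`. With no fixed line, all orbits have
size `p`, so `p` divides the number `t + 1` of lines through `q`. The dual statement is the same
argument in the dual quadrangle.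
-/

theorem Equiv.Perm.prime_dvd_card_of_pow_eq_one {α : Type*} [Finite α] {p : ℕ} (hp : p.Prime)
    {σ : Equiv.Perm α} (hσ : σ ^ p = 1) (hfree : ∀ a, σ a ≠ a) : p ∣ Nat.card α := by
  have : Fact p.Prime := ⟨hp⟩
  have : Fintype α := Fintype.ofFinite α
  rw [Nat.card_eq_fintype_card]
  by_contra hndvd
  obtain ⟨a, ha⟩ := Equiv.Perm.exists_fixed_point_of_prime (n := 1) hndvd (by rwa [pow_one])
  exact hfree a ha

namespace GQAut

variable {P L : Type*} {I : P → L → Prop}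

theorem permP_pow (x : GQAut I) (n : ℕ) : (x ^ n).permP = x.permP ^ n := by
  induction n with
  | zero => rfl
  | succ n ih => rw [pow_succ, pow_succ, ← ih]; rfl

theorem permL_pow (x : GQAut I) (n : ℕ) : (x ^ n).permL = x.permL ^ n := by
  induction n with
  | zero => rfl
  | succ n ih => rw [pow_succ, pow_succ, ← ih]; rfl

def dual (x : GQAut I) : GQAut (flip I) :=
  ⟨x.permL, x.permP, fun ℓ q => x.pres q ℓ⟩

def permLinesThrough (x : GQAut I) {q : P} (hq : x.permP q = q) :
    Equiv.Perm {ℓ : L // I q ℓ} :=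
  x.permL.subtypePerm fun ℓ => by simpa only [hq] using x.pres q ℓ

theorem prime_dvd_card_lines_through [Finite L] {p : ℕ} (hp : p.Prime) {x : GQAut I}
    (hxp : x.permL ^ p = 1) {q : P} (hq : x.permP q = q)
    (hfree : ∀ ℓ, I q ℓ → x.permL ℓ ≠ ℓ) : p ∣ Nat.card {ℓ : L // I q ℓ} := by
  refine Equiv.Perm.prime_dvd_card_of_pow_eq_one hp (σ := x.permLinesThrough hq) ?_
    fun ℓ hℓ => hfree ℓ ℓ.2 (congrArg Subtype.val hℓ)
  rw [permLinesThrough, Equiv.Perm.subtypePerm_pow]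
  ext ℓ
  simp [hxp]

theorem prime_dvd_card_points_on [Finite P] {p : ℕ} (hp : p.Prime) {x : GQAut I}
    (hxp : x.permP ^ p = 1) {ℓ : L} (hℓ : x.permL ℓ = ℓ)
    (hfree : ∀ q, I q ℓ → x.permP q ≠ q) : p ∣ Nat.card {q : P // I q ℓ} :=
  prime_dvd_card_lines_through (x := x.dual) hp hxp hℓ hfree

end GQAut

/-- For an automorphism x of prime order p of a GQ of order (s,t):
if x fixes a point, all fixed points are pairwise noncollinear, and no line is
fixed, then p ∣ t+1; dually, if x fixes a line, all fixed lines are pairwise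
nonconcurrent, and no point is fixed, then p ∣ s+1. -/
theorem statement8 {P L : Type*} (I : P → L → Prop) (s t : ℕ)
    (hGQ : IsGQ I s t) (p : ℕ) (hp : p.Prime) (x : GQAut I) (hx : orderOf x = p) :
    ((∃ q : P, x.permP q = q) →
      (∀ q r : P, x.permP q = q → x.permP r = r → q ≠ r → ¬ Collin I q r) →
      (∀ ℓ : L, x.permL ℓ ≠ ℓ) → p ∣ t + 1) ∧
    ((∃ ℓ : L, x.permL ℓ = ℓ) →
      (∀ ℓ m : L, x.permL ℓ = ℓ → x.permL m = m → ℓ ≠ m → ¬ Concur I ℓ m) →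
      (∀ q : P, x.permP q ≠ q) → p ∣ s + 1) := by
  have hxp : x ^ p = 1 := hx ▸ pow_orderOf_eq_one x
  have := hGQ.finP
  have := hGQ.finL
  constructor
  · rintro ⟨q, hq⟩ - hfree
    rw [← hGQ.pt_lines q]
    exact GQAut.prime_dvd_card_lines_through hp (by rw [← GQAut.permL_pow, hxp]; rfl) hq
      fun ℓ _ => hfree ℓ
  · rintro ⟨ℓ, hℓ⟩ - hfree
    rw [← hGQ.line_pts ℓ]
    exact GQAut.prime_dvd_card_points_on hp (by rw [← GQAut.permP_pow, hxp]; rfl) hℓ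
      fun q _ => hfree q
end

section
/- Let Q be a finite generalized quadrangle of order (s,t) and let p be a prime dividing the order of the automorphism group of Q. If p does not divide st+1, then p ≤ max{s+1, t+1}. -/
theorem Nat.card_subtype_and_ne {α : Type*} {Q : α → Prop} {a : α} (ha : Q a) :
    Nat.card {x // Q x ∧ x ≠ a} = Nat.card {x // Q x} - 1 :=
  Set.ncard_sdiff_singleton_of_mem (s := {x | Q x}) ha

theorem Nat.card_sigma_of_card_eq {ι : Type*} [Finite ι] {β : ι → Type*} [∀ i, Finite (β i)]
    {c : ℕ} (h : ∀ i, Nat.card (β i) = c) : Nat.card (Σ i, β i) = Nat.card ι * c := by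
  have := Fintype.ofFinite ι
  rw [Nat.card_sigma, Finset.sum_congr rfl fun i _ => h i, Finset.sum_const, Finset.card_univ,
    smul_eq_mul, Nat.card_eq_fintype_card]

namespace Equiv.Perm

variable {α : Type*} {p : ℕ} [Fact p.Prime]

theorem eq_one_of_pow_prime_eq_one_of_card_lt [Finite α] {σ : Perm α} (hσ : σ ^ p = 1)
    (hcard : Nat.card α < p) : σ = 1 := by
  classical
  have := Fintype.ofFinite α
  rw [Nat.card_eq_fintype_card] at hcard
  have hfix : σ.supportᶜ.card = Fintype.card α :=
    (card_compl_support_modEq (n := 1) (by rwa [pow_one])).eq_of_lt_of_lt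
      ((Finset.card_le_univ _).trans_lt hcard) hcard
  rw [Finset.card_compl] at hfix
  have := σ.support.card_le_univ
  exact support_eq_empty_iff.mp (Finset.card_eq_zero.mp (by omega))

theorem apply_eq_self_of_pow_prime_eq_one {σ : Perm α} (hσ : σ ^ p = 1) {S : α → Prop}
    [Finite {a // S a}] (hS : ∀ a, S (σ a) ↔ S a) (hcard : Nat.card {a // S a} < p)
    {a : α} (ha : S a) : σ a = a := by
  have hσS : (σ.subtypePerm hS) ^ p = 1 := by
    ext b
    simp [hσ]
  exact congrArg Subtype.val
    (DFunLike.congr_fun (eq_one_of_pow_prime_eq_one_of_card_lt hσS hcard) ⟨a, ha⟩)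

end Equiv.Perm

namespace GQAut

variable {P L : Type*} {I : P → L → Prop}

def permPHom : GQAut I →* Equiv.Perm P where
  toFun := permP
  map_one' := rfl
  map_mul' _ _ := rfl

def permLHom : GQAut I →* Equiv.Perm L where
  toFun := permL
  map_one' := rfl
  map_mul' _ _ := rfl

instance [Finite P] [Finite L] : Finite (GQAut I) :=
  Finite.of_injective (fun x => (x.permP, x.permL))
    fun _ _ h => GQAut.ext (congrArg Prod.fst h) (congrArg Prod.snd h)

end GQAut

namespace IsGQ

variable {P L : Type*} {I : P → L → Prop} {s t : ℕ}

theorem eq_of_incident (hGQ : IsGQ I s t) {a b : P} (hab : a ≠ b) {ℓ m : L}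
    (haℓ : I a ℓ) (hbℓ : I b ℓ) (ham : I a m) (hbm : I b m) : ℓ = m := by
  have := hGQ.finL
  have := Finite.card_le_one_iff_subsingleton.mp (hGQ.unique_line a b hab)
  exact congrArg Subtype.val
    (Subsingleton.elim (⟨ℓ, haℓ, hbℓ⟩ : {n // I a n ∧ I b n}) ⟨m, ham, hbm⟩)

theorem not_incident_of_ne (hGQ : IsGQ I s t) {u r : P} {ℓ m : L} (huℓ : I u ℓ)
    (hum : I u m) (hmℓ : m ≠ ℓ) (hrm : I r m) (hru : r ≠ u) : ¬ I r ℓ :=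
  fun hrℓ => hmℓ (hGQ.eq_of_incident hru hrm hum hrℓ huℓ)

theorem exists_incident_line (hGQ : IsGQ I s t) (a : P) : ∃ ℓ, I a ℓ := by
  have := hGQ.finL
  have h : 0 < Nat.card {ℓ // I a ℓ} := by rw [hGQ.pt_lines]; omega
  obtain ⟨⟨ℓ, hℓ⟩⟩ := Nat.card_pos_iff.mp h |>.1
  exact ⟨ℓ, hℓ⟩

theorem exists_ne_incident_points (hGQ : IsGQ I s t) (ℓ : L) :
    ∃ a b, a ≠ b ∧ I a ℓ ∧ I b ℓ := by
  have := hGQ.finP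
  have := Finite.one_lt_card_iff_nontrivial.mp (by rw [hGQ.line_pts]; have := hGQ.s_pos; omega :
    1 < Nat.card {a // I a ℓ})
  obtain ⟨a, b, hab⟩ := exists_pair_ne {a // I a ℓ}
  exact ⟨a, b, fun h => hab (Subtype.ext h), a.2, b.2⟩

theorem card_lines_through_ne (hGQ : IsGQ I s t) {u : P} {ℓ : L} (hu : I u ℓ) :
    Nat.card {m // I u m ∧ m ≠ ℓ} = t := by
  rw [Nat.card_subtype_and_ne hu, hGQ.pt_lines, Nat.add_sub_cancel]

theorem card_points_on_ne (hGQ : IsGQ I s t) {u : P} {m : L} (hu : I u m) :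
    Nat.card {r // I r m ∧ r ≠ u} = s := by
  rw [Nat.card_subtype_and_ne (Q := fun r => I r m) hu, hGQ.line_pts, Nat.add_sub_cancel]

/-- By the GQ axiom, every point `r` off `ℓ₀` arises in exactly one way as a point `r ≠ u` on a
line `m ≠ ℓ₀` through a point `u` of `ℓ₀`. -/
theorem card_points (hGQ : IsGQ I s t) (ℓ₀ : L) : Nat.card P = (s + 1) * (s * t + 1) := by
  classical
  have := hGQ.finP
  have := hGQ.finL
  let f : (Σ u : {u // I u ℓ₀}, Σ m : {m // I u.1 m ∧ m ≠ ℓ₀}, {r // I r m.1 ∧ r ≠ u.1}) →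
      {r // ¬ I r ℓ₀} := fun ⟨u, m, r⟩ => ⟨r, hGQ.not_incident_of_ne u.2 m.2.1 m.2.2 r.2.1 r.2.2⟩
  have hf : Function.Bijective f := by
    constructor
    · rintro ⟨⟨u₁, hu₁⟩, ⟨m₁, hm₁⟩, ⟨r, hr₁⟩⟩ ⟨⟨u₂, hu₂⟩, ⟨m₂, hm₂⟩, ⟨r₂, hr₂⟩⟩ h
      obtain rfl : r = r₂ := congrArg Subtype.val h
      obtain ⟨rfl, rfl⟩ := Prod.ext_iff.mp
        ((hGQ.gq_axiom r ℓ₀ (hGQ.not_incident_of_ne hu₁ hm₁.1 hm₁.2 hr₁.1 hr₁.2)).unique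
          (y₁ := (u₁, m₁)) (y₂ := (u₂, m₂)) ⟨hr₁.1, hm₁.1, hu₁⟩ ⟨hr₂.1, hm₂.1, hu₂⟩)
      rfl
    · rintro ⟨r, hr⟩
      obtain ⟨⟨u, m⟩, ⟨hrm, hum, huℓ⟩, -⟩ := hGQ.gq_axiom r ℓ₀ hr
      exact ⟨⟨⟨u, huℓ⟩, ⟨m, hum, fun h => hr (h ▸ hrm)⟩, ⟨r, hrm, fun h => hr (h ▸ huℓ)⟩⟩, rfl⟩
  have hoff : Nat.card {r // ¬ I r ℓ₀} = (s + 1) * (t * s) := by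
    rw [← Nat.card_eq_of_bijective f hf, Nat.card_sigma_of_card_eq fun u =>
      (Nat.card_sigma_of_card_eq fun m => hGQ.card_points_on_ne m.2.1).trans
        (by rw [hGQ.card_lines_through_ne u.2]), hGQ.line_pts]
  rw [← Nat.card_congr (Equiv.sumCompl fun r => I r ℓ₀), Nat.card_sum, hGQ.line_pts, hoff]
  ring

end IsGQ

namespace IsGQ

variable {P L : Type*} {I : P → L → Prop} {s t p : ℕ} [Fact p.Prime] {x : GQAut I}

theorem permL_eq_self_of_incident (hGQ : IsGQ I s t) (hx : x ^ p = 1) (ht : t + 1 < p)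
    {a : P} (ha : x.permP a = a) {ℓ : L} (haℓ : I a ℓ) : x.permL ℓ = ℓ := by
  have := hGQ.finL
  refine Equiv.Perm.apply_eq_self_of_pow_prime_eq_one (S := I a)
    (by rw [← GQAut.permL_pow, hx]; rfl) (fun m => ?_) (by rwa [hGQ.pt_lines]) haℓ
  conv_lhs => rw [← ha]
  exact x.pres a m

theorem permP_eq_self_of_incident (hGQ : IsGQ I s t) (hx : x ^ p = 1) (hs : s + 1 < p)
    {ℓ : L} (hℓ : x.permL ℓ = ℓ) {a : P} (haℓ : I a ℓ) : x.permP a = a := by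
  have := hGQ.finP
  refine Equiv.Perm.apply_eq_self_of_pow_prime_eq_one (S := fun b => I b ℓ)
    (by rw [← GQAut.permP_pow, hx]; rfl) (fun b => ?_) (by rwa [hGQ.line_pts]) haℓ
  conv_lhs => rw [← hℓ]
  exact x.pres b ℓ

theorem exists_permP_eq_self (hGQ : IsGQ I s t) (hx : x ^ p = 1) (hs : s + 1 < p)
    (hst : ¬ p ∣ s * t + 1) (ℓ : L) : ∃ a, x.permP a = a := by
  classical
  have := hGQ.finP
  have := Fintype.ofFinite P
  refine Equiv.Perm.exists_fixed_point_of_prime (n := 1) ?_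
    (by rw [pow_one, ← GQAut.permP_pow, hx]; rfl)
  rw [← Nat.card_eq_fintype_card, hGQ.card_points ℓ, (Fact.out : p.Prime).dvd_mul]
  rintro (h | h)
  · exact (Nat.le_of_dvd s.succ_pos h).not_gt hs
  · exact hst h

theorem permP_eq_self_of_fixed_point (hGQ : IsGQ I s t) (hx : x ^ p = 1) (hs : s + 1 < p)
    (ht : t + 1 < p) {q : P} (hq : x.permP q = q) (r : P) : x.permP r = r := by
  obtain ⟨ℓ, hqℓ⟩ := hGQ.exists_incident_line q
  have hℓ := hGQ.permL_eq_self_of_incident hx ht hq hqℓ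
  by_cases hrℓ : I r ℓ
  · exact hGQ.permP_eq_self_of_incident hx hs hℓ hrℓ
  · obtain ⟨⟨u, m⟩, ⟨hrm, hum, huℓ⟩, -⟩ := hGQ.gq_axiom r ℓ hrℓ
    have hu := hGQ.permP_eq_self_of_incident hx hs hℓ huℓ
    exact hGQ.permP_eq_self_of_incident hx hs (hGQ.permL_eq_self_of_incident hx ht hu hum) hrm

theorem eq_one_of_forall_permP_eq_self (hGQ : IsGQ I s t) (h : ∀ a, x.permP a = a) :
    x = 1 := by
  refine GQAut.ext (Equiv.ext h) (Equiv.ext fun m => ?_)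
  obtain ⟨a, b, hab, ham, hbm⟩ := hGQ.exists_ne_incident_points m
  refine hGQ.eq_of_incident hab ?_ ?_ ham hbm
  · simpa [h a] using (x.pres a m).mpr ham
  · simpa [h b] using (x.pres b m).mpr hbm

theorem eq_one_of_pow_prime_eq_one (hGQ : IsGQ I s t) (hx : x ^ p = 1) (hs : s + 1 < p)
    (ht : t + 1 < p) (hst : ¬ p ∣ s * t + 1) : x = 1 := by
  refine hGQ.eq_one_of_forall_permP_eq_self fun r => ?_
  obtain ⟨ℓ, -⟩ := hGQ.exists_incident_line r
  obtain ⟨q, hq⟩ := hGQ.exists_permP_eq_self hx hs hst ℓ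
  exact hGQ.permP_eq_self_of_fixed_point hx hs ht hq r

end IsGQ

/-- If a prime p divides the order of the automorphism group of a GQ
of order (s,t) and p does not divide st+1, then p ≤ max(s+1, t+1). -/
theorem statement16 {P L : Type*} (I : P → L → Prop) (s t : ℕ)
    (hGQ : IsGQ I s t) (p : ℕ) (hp : p.Prime)
    (hdvd : p ∣ Nat.card (GQAut I)) (hndvd : ¬ p ∣ s * t + 1) :
    p ≤ max (s + 1) (t + 1) := by
  by_contra! hlt
  obtain ⟨hs, ht⟩ := max_lt_iff.mp hlt
  have := Fact.mk hp
  have := hGQ.finP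
  have := hGQ.finL
  obtain ⟨x, hx⟩ := exists_prime_orderOf_dvd_card' p hdvd
  have hx1 := hGQ.eq_one_of_pow_prime_eq_one (hx ▸ pow_orderOf_eq_one x) hs ht hndvd
  rw [hx1, orderOf_one] at hx
  exact hp.one_lt.ne hx
end
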